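/- With M_1 := Z_1·Z_0⁻¹ and M_3 := (1/6)·Z_3·Z_0⁻¹ − (3/2)·Z_1·Z_2·Z_0⁻² + 2·(Z_1·Z_0⁻¹)³, the identity 6λ⁴·M_3 = M_1 − 1 − 9λ²·M_1² + 7λ²·M_1 + 12λ⁴·M_1³ holds in ℚ[[λ]]. -/

import Mathlib

open PowerSeries

/-- Double factorial with `dfact 0 = 1`; by natural subtraction, `dfact (2*k - 1)`
is `(2k-1)!!` with the convention `(-1)!! = 1` at `k = 0`. -/
def dfact : ℕ → ℕ
  | 0 => 1
  | 1 => 1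
  | n + 2 => (n + 2) * dfact n

/-- `Zser j ∈ ℚ[[λ]]` has coefficient of `λ^(2k)` equal to `(2k+j)!·(2k-1)!!/(2k)!`
and vanishing odd-degree coefficients. -/
noncomputable def Zser (j : ℕ) : PowerSeries ℚ :=
  PowerSeries.mk fun n => if n % 2 = 0 then
    (Nat.factorial (n + j) : ℚ) * (dfact (n - 1) : ℚ) / (Nat.factorial n : ℚ) else 0

/-- The generating function of one-rooted maps, `M₁ = Z₁/Z₀`. -/
noncomputable def M1 : PowerSeries ℚ := Zser 1 * (Zser 0)⁻¹

/-- The generating function of three-rooted maps,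
`M₃ = (1/6)·Z₃/Z₀ − (3/2)·Z₁Z₂/Z₀² + 2·(Z₁/Z₀)³`. -/
noncomputable def M3 : PowerSeries ℚ :=
  (PowerSeries.C (1 / 6 : ℚ)) * Zser 3 * (Zser 0)⁻¹
    - (PowerSeries.C (3 / 2 : ℚ)) * Zser 1 * Zser 2 * ((Zser 0)⁻¹) ^ 2
    + 2 * (Zser 1 * (Zser 0)⁻¹) ^ 3

lemma dfact_succ (n : ℕ) : dfact (n + 1) = (n + 1) * dfact (n - 1) := by
  cases n with
  | zero => simp [dfact]
  | succ m => simp [dfact]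

lemma coeff_Zser (j n : ℕ) :
    (PowerSeries.coeff n) (Zser j) =
      if n % 2 = 0 then
        (Nat.factorial (n + j) : ℚ) * (dfact (n - 1) : ℚ) / (Nat.factorial n : ℚ)
      else 0 := by
  simp [Zser]

lemma hZ2 : (X : PowerSeries ℚ) ^ 2 * Zser 2 = Zser 1 - Zser 0 := by
  ext n
  rw [map_sub, PowerSeries.coeff_X_pow_mul']
  rcases n with _ | _ | m
  · norm_num [coeff_Zser, dfact]
  · norm_num [coeff_Zser]
  · rw [if_pos (by omega : 2 ≤ m + 2)]
    simp only [coeff_Zser]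
    simp only [show m + 1 + 1 - 2 = m by omega, show m + 1 + 1 - 1 = m + 1 by omega,
      show m + 1 + 1 + 1 = m + 3 by omega, show m + 1 + 1 + 0 = m + 2 by omega,
      show m + 1 + 1 = m + 2 by omega, show (m + 2) % 2 = m % 2 by omega]
    rcases Nat.even_or_odd m with he | ho
    · have h0 : m % 2 = 0 := Nat.even_iff.mp he
      simp only [if_pos h0]
      have hd : (dfact (m + 1) : ℚ) = (m + 1) * dfact (m - 1) := by
        rw [dfact_succ]; push_cast; ring
      have e1 : ((m + 2).factorial : ℚ) = (m + 2) * (m + 1) * m.factorial := by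
        rw [show m + 2 = m + 1 + 1 by ring, Nat.factorial_succ, Nat.factorial_succ]
        push_cast; ring
      have e2 : ((m + 3).factorial : ℚ) = (m + 3) * (m + 2) * (m + 1) * m.factorial := by
        rw [show m + 3 = m + 1 + 1 + 1 by ring]
        simp only [Nat.factorial_succ]
        push_cast; ring
      rw [hd, e1]
      rw [e2]
      have hf : (m.factorial : ℚ) ≠ 0 := Nat.cast_ne_zero.mpr m.factorial_ne_zero
      field_simp
      ring
    · have h1 : m % 2 = 1 := Nat.odd_iff.mp ho
      simp [h1]

lemma hZ3 : (X : PowerSeries ℚ) ^ 2 * Zser 3 = Zser 2 - 2 * Zser 1 := by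
  ext n
  rw [two_mul, map_sub, map_add, PowerSeries.coeff_X_pow_mul']
  rcases n with _ | _ | m
  · norm_num [coeff_Zser, dfact, Nat.factorial]
  · norm_num [coeff_Zser]
  · rw [if_pos (by omega : 2 ≤ m + 2)]
    simp only [coeff_Zser]
    simp only [show m + 1 + 1 - 2 = m by omega, show m + 1 + 1 - 1 = m + 1 by omega,
      show m + 1 + 1 + 1 = m + 3 by omega, show m + 1 + 1 + 2 = m + 4 by omega,
      show m + 1 + 1 = m + 2 by omega, show (m + 2) % 2 = m % 2 by omega]
    rcases Nat.even_or_odd m with he | ho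
    · have h0 : m % 2 = 0 := Nat.even_iff.mp he
      simp only [if_pos h0]
      have hd : (dfact (m + 1) : ℚ) = (m + 1) * dfact (m - 1) := by
        rw [dfact_succ]; push_cast; ring
      have e1 : ((m + 2).factorial : ℚ) = (m + 2) * (m + 1) * m.factorial := by
        rw [show m + 2 = m + 1 + 1 by ring, Nat.factorial_succ, Nat.factorial_succ]
        push_cast; ring
      have e2 : ((m + 3).factorial : ℚ) = (m + 3) * (m + 2) * (m + 1) * m.factorial := by
        rw [show m + 3 = m + 1 + 1 + 1 by ring]
        simp only [Nat.factorial_succ]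
        push_cast; ring
      have e3 : ((m + 4).factorial : ℚ) = (m + 4) * (m + 3) * (m + 2) * (m + 1) * m.factorial := by
        rw [show m + 4 = m + 1 + 1 + 1 + 1 by ring]
        simp only [Nat.factorial_succ]
        push_cast; ring
      rw [hd, e1, e3]
      rw [e2]
      have hf : (m.factorial : ℚ) ≠ 0 := Nat.cast_ne_zero.mpr m.factorial_ne_zero
      field_simp
      ring
    · have h1 : m % 2 = 1 := Nat.odd_iff.mp ho
      simp [h1]

lemma hc0 : PowerSeries.constantCoeff (Zser 0) = 1 := by
  have := coeff_Zser 0 0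
  rw [PowerSeries.coeff_zero_eq_constantCoeff] at this
  simpa [dfact, Nat.factorial] using this

lemma hinv : Zser 0 * (Zser 0)⁻¹ = 1 :=
  PowerSeries.mul_inv_cancel _ (by rw [hc0]; exact one_ne_zero)

/-- `6λ⁴·M₃ = M₁ − 1 − 9λ²·M₁² + 7λ²·M₁ + 12λ⁴·M₁³` in `ℚ[[λ]]`. -/
theorem M3_in_terms_of_M1 :
    6 * X ^ 4 * M3 = M1 - 1 - 9 * X ^ 2 * M1 ^ 2 + 7 * X ^ 2 * M1 + 12 * X ^ 4 * M1 ^ 3 := by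
  have hA := hinv
  set A := Zser 0
  set B := Zser 1
  set C := Zser 2
  set D := Zser 3
  set Ai := (Zser 0)⁻¹ with hAi
  have hP : X ^ 4 * D * A ^ 2 - 9 * X ^ 4 * B * C * A
      = B * A ^ 2 - A ^ 3 - 9 * X ^ 2 * B ^ 2 * A + 7 * X ^ 2 * B * A ^ 2 := by
    linear_combination (X ^ 2 * A ^ 2) * hZ3 + (A ^ 2 - 9 * X ^ 2 * B * A) * hZ2
  have hE : (6 : PowerSeries ℚ) * PowerSeries.C (1/6 : ℚ) = 1 := by
    rw [← map_ofNat (PowerSeries.C (R := ℚ)) 6, ← map_mul]; norm_num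
  have hF : (2 : PowerSeries ℚ) * PowerSeries.C (3/2 : ℚ) = 3 := by
    rw [← map_ofNat (PowerSeries.C (R := ℚ)) 2, ← map_mul, show (2:ℚ) * (3/2) = 3 by norm_num,
      map_ofNat]
  have hM3 : 6 * X ^ 4 * M3
      = X ^ 4 * D * Ai - 9 * X ^ 4 * B * C * Ai ^ 2 + 12 * X ^ 4 * B ^ 3 * Ai ^ 3 := by
    rw [M3]
    linear_combination (X ^ 4 * D * Ai) * hE + (-3 * X ^ 4 * B * C * Ai ^ 2) * hF
  rw [hM3, M1]
  linear_combination Ai ^ 3 * hP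
    + (-(X^4) * D * Ai * (A * Ai + 1) + 9 * X^4 * B * C * Ai^2 + B * Ai * (A * Ai + 1)
        - ((A*Ai)^2 + A*Ai + 1) - 9 * X^2 * B^2 * Ai^2 + 7 * X^2 * B * Ai * (A*Ai+1)) * hA
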